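/- In the ring of formal power series in two variables x and q with integer coefficients, 1 + Σ_{m=1}^∞ x^m [(xq)_m − (xq)_{m−1}] = (1 − x) · Σ_{m=0}^∞ (xq)_m x^m = Σ_{r=0}^∞ (x)_{r+1} x^r, where (xq)_m = ∏_{j=1}^m (1 − x q^j) and (x)_{r+1} = ∏_{k=1}^{r+1} (1 − x q^{k−1}) = (1 − x)(1 − xq)⋯(1 − x q^r). (All three infinite sums are well defined in ℤ⟦x, q⟧ since the m-th, respectively r-th, term is divisible by x^m, respectively x^r.) -/

import Mathlib

open PowerSeries Finset

/-- `ℤ⟦x,q⟧`, realized as `(ℤ⟦q⟧)⟦x⟧`. -/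
abbrev Zxq : Type := PowerSeries (PowerSeries ℤ)

/-- The variable `x`. -/
noncomputable def xv : Zxq := PowerSeries.X

/-- The variable `q`. -/
noncomputable def qv : Zxq := PowerSeries.C (R := PowerSeries ℤ) PowerSeries.X

/-- `(xq)_m = ∏_{j=1}^m (1 - x q^j)` in `ℤ⟦x,q⟧`, with `(xq)_0 = 1`. -/
noncomputable def xqPoch (m : ℕ) : Zxq :=
  ∏ j ∈ Finset.range m, (1 - xv * qv ^ (j + 1))

/-- `(x)_n = ∏_{k=1}^n (1 - x q^{k-1})` in `ℤ⟦x,q⟧`; so `(x)_{r+1} = (1-x)(1-xq)⋯(1-xq^r)`. -/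
noncomputable def xPoch (n : ℕ) : Zxq :=
  ∏ k ∈ Finset.range n, (1 - xv * qv ^ k)

/-- `1 + Σ_{m=1}^∞ x^m [(xq)_m - (xq)_{m-1}]`, defined by its coefficient of `x^a`:
the `m`-th term is divisible by `x^m`, so only terms with `m ≤ a` contribute. -/
noncomputable def seriesA : Zxq :=
  1 + PowerSeries.mk fun a =>
    PowerSeries.coeff (R := PowerSeries ℤ) a
      (∑ m ∈ Finset.Icc 1 a, xv ^ m * (xqPoch m - xqPoch (m - 1)))

/-- `(1 - x) · Σ_{m=0}^∞ (xq)_m x^m`, the sum defined by its coefficient of `x^a`: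
the `m`-th term is divisible by `x^m`, so only terms with `m ≤ a` contribute. -/
noncomputable def seriesB : Zxq :=
  (1 - xv) * PowerSeries.mk fun a =>
    PowerSeries.coeff (R := PowerSeries ℤ) a (∑ m ∈ Finset.range (a + 1), xqPoch m * xv ^ m)

/-- `Σ_{r=0}^∞ (x)_{r+1} x^r`, defined by its coefficient of `x^a`: the `r`-th term is
divisible by `x^r`, so only terms with `r ≤ a` contribute. -/
noncomputable def seriesC : Zxq :=
  PowerSeries.mk fun a =>
    PowerSeries.coeff (R := PowerSeries ℤ) a (∑ r ∈ Finset.range (a + 1), xPoch (r + 1) * xv ^ r)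


/-
Writing `T_N = Σ_{m<N} (xq)_m x^m`, summation by parts gives the polynomial identity
`1 + Σ_{m=1}^a x^m [(xq)_m - (xq)_{m-1}] = (1 - x) T_{a+1} + x^{a+1} (xq)_a`, and
`(x)_{r+1} = (1 - x) (xq)_r` gives `(1 - x) T_{a+1} = Σ_{r ≤ a} (x)_{r+1} x^r`. Since the
coefficient of `x^a` of each of the three series only sees `T_{a+1}`, and `x^{a+1} (xq)_a`
does not contribute to it, the three series agree coefficientwise.
-/

theorem add_sum_Icc_pow_mul_sub_eq {R : Type*} [CommRing R] (x : R) (P : ℕ → R) (a : ℕ) :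
    P 0 + ∑ m ∈ Icc 1 a, x ^ m * (P m - P (m - 1))
      = (1 - x) * ∑ m ∈ range (a + 1), P m * x ^ m + x ^ (a + 1) * P a := by
  induction a with
  | zero =>
    rw [Icc_eq_empty_of_lt zero_lt_one, sum_empty, sum_range_one]
    ring
  | succ n ih =>
    rw [sum_Icc_succ_top (by omega), ← add_assoc, ih, Nat.add_sub_cancel,
      sum_range_succ _ (n + 1)]
    ring

namespace PowerSeries

variable {R : Type*} [CommRing R]

theorem coeff_sum_range_mul_X_pow_of_lt (f : ℕ → R⟦X⟧) {a N : ℕ} (h : a < N) :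
    coeff a (∑ m ∈ range N, f m * X ^ m) = coeff a (∑ m ∈ range (a + 1), f m * X ^ m) := by
  rw [← sum_range_add_sum_Ico _ h, map_add, add_eq_left, map_sum]
  refine sum_eq_zero fun m hm => ?_
  rw [coeff_mul_X_pow', if_neg (by rw [mem_Ico] at hm; omega)]

theorem coeff_mul_congr_right {a : ℕ} (c : R⟦X⟧) {f g : R⟦X⟧}
    (h : ∀ b ≤ a, coeff b f = coeff b g) : coeff a (c * f) = coeff a (c * g) := by
  rw [coeff_mul, coeff_mul]
  refine sum_congr rfl fun p hp => ?_
  rw [h p.2 (by rw [HasAntidiagonal.mem_antidiagonal] at hp; omega)]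

theorem coeff_mul_mk_coeff_sum_range (c : R⟦X⟧) (f : ℕ → R⟦X⟧) (a : ℕ) :
    coeff a (c * mk fun b => coeff b (∑ m ∈ range (b + 1), f m * X ^ m))
      = coeff a (c * ∑ m ∈ range (a + 1), f m * X ^ m) :=
  coeff_mul_congr_right c fun b hb => by
    rw [coeff_mk, coeff_sum_range_mul_X_pow_of_lt f (by omega : b < a + 1)]

end PowerSeries

theorem xqPoch_zero : xqPoch 0 = 1 := prod_range_zero _

theorem xPoch_succ (r : ℕ) : xPoch (r + 1) = (1 - xv) * xqPoch r := by
  rw [xPoch, prod_range_succ', xqPoch, pow_zero, mul_one, mul_comm]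

/-- `1 + Σ_{m=1}^∞ x^m [(xq)_m - (xq)_{m-1}] = (1-x) Σ_{m=0}^∞ (xq)_m x^m
= Σ_{r=0}^∞ (x)_{r+1} x^r` in `ℤ⟦x,q⟧`. -/
theorem seriesA_eq_seriesB_eq_seriesC : seriesA = seriesB ∧ seriesB = seriesC := by
  have coeff_seriesB (a : ℕ) : coeff a seriesB
      = coeff a ((1 - xv) * ∑ m ∈ range (a + 1), xqPoch m * xv ^ m) :=
    coeff_mul_mk_coeff_sum_range _ xqPoch a
  constructor
  · ext a
    have summation := add_sum_Icc_pow_mul_sub_eq xv xqPoch a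
    rw [xqPoch_zero] at summation
    have tail_vanishes : coeff a (xv ^ (a + 1) * xqPoch a) = 0 := by
      rw [xv, coeff_X_pow_mul', if_neg (by omega)]
    rw [coeff_seriesB, seriesA, map_add, coeff_mk, ← map_add, summation, map_add,
      tail_vanishes, add_zero]
  · ext a
    simp only [coeff_seriesB, seriesC, coeff_mk, mul_sum, xPoch_succ, mul_assoc]
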